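/- arXiv:2201.08899 — 2 statements merged into one kernel-verified Lean document; each statement's English description precedes it below -/
import Mathlib

section
/- Let V be a finite set, ∅ ≠ V_1 ⊊ V, and m = #(V ∖ V_1) + 1. Let v = (v_0, …, v_k) be a self-avoiding finite path with all entries in V ∖ V_1, and let V_1 = W_1 ⊊ W_2 ⊊ ⋯ ⊊ W_m = V be subsets such that #(W_{j+1} ∖ W_j) = 1 for every 1 ≤ j ≤ m−1 and W_{j+2} ∖ W_{j+1} = {v_j} for every 0 ≤ j ≤ k. Then for every finite path w on V satisfying 𝔏_{V_1}(w) = w and (𝔏(w))^{[V ∖ V_1]} ≠ v, one has (𝔏_{W_m} ∘ ⋯ ∘ 𝔏_{W_3} ∘ 𝔏_{W_2}(w))^{[V ∖ V_1]} ≠ v. -/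
/-!
Since `𝔏_{V₁}(w) = w`, no vertex of `V₁ = W₁` is visited twice by `w`, and each `𝔏_{W_j}`
leaves every vertex of `W_j` visited at most once. On such a path `𝔏_{W_{j+1}}` can only erase
the loop at the one new vertex `x_j` of `W_{j+1} ∖ W_j`, so the iteration erases the loops at
`x_1, x_2, …, x_{m-1}` (an enumeration of `V ∖ V₁`) one vertex at a time, in this order.
The loop erasure `𝔏` also erases one loop per vertex, in the order in which its output visits
them. So if the vertices outside `V₁` that survive the iteration are an initial segment
`x_1, …, x_i` (as `v` is, by `W_{j+2} ∖ W_{j+1} = {v_j}`), both procedures erase the same loops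
in the same order and the iteration returns `𝔏(w)` itself.
-/

open MeasureTheory

namespace LERW

variable {V : Type*} [DecidableEq V]

/-- The suffix of `l` strictly after the last occurrence of `a` in `l`
(`l` itself if `a` does not occur in `l`). -/
def dropToLastOcc (a : V) (l : List V) : List V :=
  (l.reverse.takeWhile (fun z => z ≠ a)).reverse

lemma dropToLastOcc_length_le (a : V) (l : List V) :
    (dropToLastOcc a l).length ≤ l.length := by
  unfold dropToLastOcc
  calc ((l.reverse.takeWhile (fun z => z ≠ a)).reverse).length
      = (l.reverse.takeWhile (fun z => z ≠ a)).length := by simp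
    _ ≤ l.reverse.length := (List.takeWhile_sublist _).length_le
    _ = l.length := by simp

/-- Partial loop erasure `𝔏_S` of a finite path, associated with a set `S` of vertices. -/
def PLE (S : Finset V) : List V → List V
  | [] => []
  | a :: rest =>
    if a ∈ S then
      if a = (a :: rest).getLast (List.cons_ne_nil a rest) then [a]
      else a :: PLE S (dropToLastOcc a rest)
    else
      if rest = [] then [a]
      else a :: PLE S rest
termination_by l => l.length
decreasing_by
  · simpa using Nat.lt_succ_of_le (dropToLastOcc_length_le a rest)
  · simp

variable [Fintype V]

/-- The (full) loop erasure `𝔏 = 𝔏_V`. -/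
def LE : List V → List V := PLE Finset.univ

/-- Iterated partial loop erasure `𝔏_{W m} ∘ ⋯ ∘ 𝔏_{W 2} ∘ 𝔏_{W 1}`. -/
def iterPLE (W : ℕ → Finset V) : ℕ → List V → List V
  | 0, l => l
  | n + 1, l => PLE (W (n + 1)) (iterPLE W n l)

/-- The remaining suffix `w|_{[n_j , η]}` of the loop-erasing walk of `𝔏` the first time
its current value equals `b` (`[]` if this never happens). -/
def LEsuffixAt (b : V) : List V → List V
  | [] => []
  | a :: rest =>
    if a = b then a :: rest
    else if a = (a :: rest).getLast (List.cons_ne_nil a rest) then []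
    else LEsuffixAt b (dropToLastOcc a rest)
termination_by l => l.length
decreasing_by
  simpa using Nat.lt_succ_of_le (dropToLastOcc_length_le a rest)

/-- Entry time `τ_A` into `A ⊆ V`, valued in `ℕ∞`. -/
noncomputable def entryTime (A : Finset V) (ω : ℕ → V) : ℕ∞ :=
  sInf {m : ℕ∞ | ∃ n : ℕ, m = (n : ℕ∞) ∧ ω n ∈ A}

/-- Entry time `τ_A` as a natural number (junk value `0` when `A` is never visited). -/
noncomputable def entryTimeNat (A : Finset V) (ω : ℕ → V) : ℕ :=
  sInf {n : ℕ | ω n ∈ A}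

/-- The random finite path `X|_{[0, τ_A]} = (X_0, X_1, …, X_{τ_A})`. -/
noncomputable def stoppedPath (A : Finset V) (ω : ℕ → V) : List V :=
  (List.range (entryTimeNat A ω + 1)).map ω

/-- Iterated hitting times `τ̊_W^{(n)}` of `W`, valued in `ℕ∞` (with the convention
`τ̊_W^{(0)} = 0`). -/
noncomputable def iterHit (W : Finset V) (ω : ℕ → V) : ℕ → ℕ∞
  | 0 => 0
  | n + 1 => sInf {m : ℕ∞ | ∃ k : ℕ, m = (k : ℕ∞) ∧ iterHit W ω n < (k : ℕ∞) ∧ ω k ∈ W}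

/-- The time `τ̊_W^{(n)} ∧ τ_A`, as a natural number. -/
noncomputable def traceTime (W A : Finset V) (ω : ℕ → V) (n : ℕ) : ℕ :=
  (iterHit W ω n ⊓ entryTime A ω).toNat

variable [MeasurableSpace V]

/-- The trace process `X̃_n = X_{τ̊_W^{(n)} ∧ τ_A}` (so `X̃_0 = X_0`). -/
noncomputable def traceProc (W A : Finset V) (ω : ℕ → V) (n : ℕ) : V :=
  ω (traceTime W A ω n)

/-- The Green function `G_B(x, y) = 𝔼_x(#{0 ≤ n < τ_{V∖B} : X_n = y})`. -/
noncomputable def green (μ : V → Measure (ℕ → V)) (B : Finset V) (x y : V) : ℝ :=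
  ∑' n : ℕ, (μ x {ω | ω n = y ∧ ∀ k ≤ n, ω k ∈ B}).toReal

end LERW

namespace LERW

variable {V : Type*} [DecidableEq V]

lemma notMem_dropToLastOcc (a : V) (l : List V) : a ∉ dropToLastOcc a l := by
  intro h
  have := List.mem_takeWhile_imp (List.mem_reverse.1 h)
  simp at this

lemma dropToLastOcc_sublist (a : V) (l : List V) : (dropToLastOcc a l).Sublist l := by
  simpa [dropToLastOcc] using (List.takeWhile_sublist (fun z => z ≠ a) (l := l.reverse)).reverse

lemma dropToLastOcc_of_notMem {a : V} {l : List V} (h : a ∉ l) : dropToLastOcc a l = l := by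
  rw [dropToLastOcc, List.takeWhile_eq_self_iff.2, List.reverse_reverse]
  intro z hz
  simpa using fun hza : z = a => h (hza ▸ List.mem_reverse.1 hz)

lemma dropToLastOcc_eq_nil_of_getLast {a : V} {t : List V}
    (h : (a :: t).getLast (List.cons_ne_nil a t) = a) : dropToLastOcc a t = [] := by
  rcases List.eq_nil_or_concat t with rfl | ⟨s, b, rfl⟩
  · rfl
  · simp_all [dropToLastOcc]

@[elab_as_elim]
theorem induction_on_dropToLastOcc {motive : List V → Prop} (nil : motive [])
    (cons : ∀ a t, motive t → motive (dropToLastOcc a t) → motive (a :: t)) (l : List V) :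
    motive l := by
  induction h : l.length using Nat.strong_induction_on generalizing l with
  | _ n ih =>
    rcases l with _ | ⟨a, t⟩
    · exact nil
    · subst h
      exact cons a t (ih _ (by simp) t rfl)
        (ih _ (Nat.lt_succ_of_le (dropToLastOcc_length_le a t)) _ rfl)

lemma PLE_cons_of_mem {S : Finset V} {a : V} (h : a ∈ S) (t : List V) :
    PLE S (a :: t) = a :: PLE S (dropToLastOcc a t) := by
  rw [PLE, if_pos h]
  split_ifs with hlast
  · rw [dropToLastOcc_eq_nil_of_getLast hlast.symm, PLE]
  · rfl

lemma PLE_cons_of_notMem {S : Finset V} {a : V} (h : a ∉ S) (t : List V) :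
    PLE S (a :: t) = a :: PLE S t := by
  rw [PLE, if_neg h]
  split_ifs with ht
  · rw [ht, PLE]
  · rfl

lemma PLE_cons_of_notMem_tail (S : Finset V) {a : V} {t : List V} (h : a ∉ t) :
    PLE S (a :: t) = a :: PLE S t := by
  by_cases ha : a ∈ S
  · rw [PLE_cons_of_mem ha, dropToLastOcc_of_notMem h]
  · exact PLE_cons_of_notMem ha t

lemma PLE_eq_self_of_disjoint {S : Finset V} {l : List V} (h : ∀ a ∈ l, a ∉ S) :
    PLE S l = l := by
  induction l with
  | nil => rw [PLE]
  | cons a t ih =>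
    rw [PLE_cons_of_notMem (h a List.mem_cons_self), ih fun b hb => h b (List.mem_cons_of_mem a hb)]

lemma PLE_sublist (S : Finset V) (l : List V) : (PLE S l).Sublist l := by
  induction l using induction_on_dropToLastOcc with
  | nil => rw [PLE]
  | cons a t ih ih' =>
    by_cases ha : a ∈ S
    · rw [PLE_cons_of_mem ha]
      exact (ih'.trans (dropToLastOcc_sublist a t)).cons_cons a
    · rw [PLE_cons_of_notMem ha]
      exact ih.cons_cons a

lemma count_PLE_le_one (S : Finset V) (l : List V) {a : V} (ha : a ∈ S) :
    (PLE S l).count a ≤ 1 := by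
  induction l using induction_on_dropToLastOcc with
  | nil => simp [PLE]
  | cons b t ih ih' =>
    by_cases hb : b ∈ S
    · rw [PLE_cons_of_mem hb, List.count_cons]
      by_cases hab : b = a
      · subst hab
        have : b ∉ PLE S (dropToLastOcc b t) :=
          fun h => notMem_dropToLastOcc b t ((PLE_sublist S _).subset h)
        simp [List.count_eq_zero.2 this]
      · simpa [hab] using ih'
    · rw [PLE_cons_of_notMem hb, List.count_cons]
      simpa [show b ≠ a from fun h => hb (h ▸ ha)] using ih

lemma notMem_of_count_cons_self_le_one {a : V} {t : List V} (h : (a :: t).count a ≤ 1) :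
    a ∉ t := by
  rw [List.count_cons_self] at h
  exact List.count_eq_zero.1 (by omega)

lemma PLE_union_of_count_le_one (S T : Finset V) (l : List V)
    (h : ∀ a ∈ S, l.count a ≤ 1) : PLE (T ∪ S) l = PLE T l := by
  induction l using induction_on_dropToLastOcc with
  | nil => rw [PLE, PLE]
  | cons a t ih ih' =>
    have hS : ∀ b ∈ S, t.count b ≤ 1 :=
      fun b hb => (List.count_le_count_cons ..).trans (h b hb)
    by_cases haT : a ∈ T
    · rw [PLE_cons_of_mem haT, PLE_cons_of_mem (Finset.mem_union_left S haT),
        ih' fun b hb => ((dropToLastOcc_sublist a t).count_le b).trans (hS b hb)]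
    · rw [PLE_cons_of_notMem haT, ← ih hS]
      by_cases haS : a ∈ S
      · exact PLE_cons_of_notMem_tail _ (notMem_of_count_cons_self_le_one (h a haS))
      · exact PLE_cons_of_notMem (by simp [haT, haS]) t

lemma PLE_singleton_cons_self (a : V) (t : List V) :
    PLE {a} (a :: t) = a :: dropToLastOcc a t := by
  rw [PLE_cons_of_mem (Finset.mem_singleton_self a),
    PLE_eq_self_of_disjoint fun b hb hba =>
      notMem_dropToLastOcc a t (by rwa [Finset.mem_singleton.1 hba] at hb)]

/-- `chainPLE [x₁, …, xₙ] = 𝔏_{{xₙ}} ∘ ⋯ ∘ 𝔏_{{x₁}}`. -/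
def chainPLE (xs w : List V) : List V :=
  xs.foldl (fun l x => PLE {x} l) w

lemma chainPLE_cons (x : V) (xs w : List V) : chainPLE (x :: xs) w = chainPLE xs (PLE {x} w) :=
  rfl

lemma chainPLE_append_singleton (xs : List V) (x : V) (w : List V) :
    chainPLE (xs ++ [x]) w = PLE {x} (chainPLE xs w) := by
  simp [chainPLE]

lemma chainPLE_nil_right (xs : List V) : chainPLE xs [] = [] := by
  induction xs with
  | nil => rfl
  | cons x xs ih => rw [chainPLE_cons, PLE, ih]

lemma chainPLE_sublist (xs w : List V) : (chainPLE xs w).Sublist w := by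
  induction xs generalizing w with
  | nil => exact List.Sublist.refl w
  | cons x xs ih => exact (ih _).trans (PLE_sublist _ w)

lemma exists_chainPLE_cons_eq_cons (a : V) (xs t : List V) :
    ∃ t', chainPLE xs (a :: t) = a :: t' := by
  induction xs generalizing t with
  | nil => exact ⟨t, rfl⟩
  | cons x xs ih =>
    rw [chainPLE_cons]
    by_cases hax : a = x
    · subst hax
      rw [PLE_singleton_cons_self]
      exact ih _
    · rw [PLE_cons_of_notMem (by simpa using hax)]
      exact ih _

lemma chainPLE_cons_of_notMem {a : V} {xs : List V} (ha : a ∉ xs) (t : List V) :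
    chainPLE xs (a :: t) = a :: chainPLE xs t := by
  induction xs generalizing t with
  | nil => rfl
  | cons x xs ih =>
    rw [List.mem_cons, not_or] at ha
    rw [chainPLE_cons, chainPLE_cons, PLE_cons_of_notMem (by simpa using ha.1), ih ha.2]

lemma exists_list_of_card_sdiff_eq_one (W : ℕ → Finset V) (n : ℕ)
    (h : ∀ j < n, W j ⊆ W (j + 1) ∧ (W (j + 1) \ W j).card = 1) :
    ∃ xs : List V, xs.length = n ∧ xs.Nodup ∧ (∀ x ∈ xs, x ∉ W 0) ∧
      (∀ z, z ∈ W n ↔ z ∈ W 0 ∨ z ∈ xs) ∧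
      ∀ j (hj : j < xs.length), xs[j] ∉ W j ∧ W (j + 1) = insert xs[j] (W j) := by
  induction n with
  | zero => exact ⟨[], rfl, List.nodup_nil, by simp, by simp, by simp⟩
  | succ n ih =>
    obtain ⟨xs, hlen, hnodup, hdisj, hmem, hstep⟩ := ih fun j hj => h j (by omega)
    obtain ⟨hsub, hcard⟩ := h n (by omega)
    obtain ⟨x, hx⟩ := Finset.card_eq_one.1 hcard
    have hxn : x ∉ W n := (Finset.mem_sdiff.1 (hx ▸ Finset.mem_singleton_self x)).2
    have hins : W (n + 1) = insert x (W n) := by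
      rw [← Finset.sdiff_union_of_subset hsub, hx, Finset.insert_eq]
    have hxxs : x ∉ xs := fun h => hxn ((hmem x).2 (Or.inr h))
    have hxW : x ∉ W 0 := fun h => hxn ((hmem x).2 (Or.inl h))
    refine ⟨xs ++ [x], by simp [hlen], List.concat_eq_append ▸ hnodup.concat hxxs, ?_, ?_, ?_⟩
    · simpa [or_imp, forall_and] using ⟨hdisj, hxW⟩
    · intro z
      simp only [hins, Finset.mem_insert, hmem, List.mem_append, List.mem_singleton]
      tauto
    · intro j hj
      rcases Nat.lt_or_ge j xs.length with hj' | hj'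
      · rw [List.getElem_append_left hj']
        exact hstep j hj'
      · obtain rfl : j = n := by simp at hj; omega
        rw [List.getElem_append_right (by omega)]
        simpa [hlen] using ⟨hxn, hins⟩

lemma count_iterPLE_le_one (W : ℕ → Finset V) {l : List V} (hl : ∀ a ∈ W 0, l.count a ≤ 1) :
    ∀ n, ∀ a ∈ W n, (iterPLE W n l).count a ≤ 1
  | 0 => hl
  | _ + 1 => fun _ ha => count_PLE_le_one _ _ ha

lemma iterPLE_eq_chainPLE (W : ℕ → Finset V) (xs : List V) {l : List V}
    (hW : ∀ j (hj : j < xs.length), W (j + 1) = insert xs[j] (W j))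
    (hl : ∀ a ∈ W 0, l.count a ≤ 1) : iterPLE W xs.length l = chainPLE xs l := by
  induction xs using List.reverseRecOn with
  | nil => rfl
  | append_singleton ys x ih =>
    have ih := ih fun j hj => by
      rw [hW j (by simp; omega), List.getElem_append_left hj]
    have hcount := ih ▸ count_iterPLE_le_one W hl ys.length
    have hWx : W (ys.length + 1) = {x} ∪ W ys.length := by
      rw [hW ys.length (by simp), List.getElem_concat_length rfl, Finset.insert_eq]
    rw [List.length_append, List.length_singleton, iterPLE, ih, hWx,
      PLE_union_of_count_le_one _ _ _ hcount, chainPLE_append_singleton]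

variable [Fintype V]

lemma LE_cons (a : V) (t : List V) : LE (a :: t) = a :: LE (dropToLastOcc a t) :=
  PLE_cons_of_mem (Finset.mem_univ a) t

lemma chainPLE_eq_LE_of_filter_prefix (w : List V) {xs : List V} (hxs : xs.Nodup)
    (hw : ∀ z ∉ xs, w.count z ≤ 1)
    (hpre : (chainPLE xs w).filter (· ∈ xs) <+: xs) : chainPLE xs w = LE w := by
  induction w using induction_on_dropToLastOcc generalizing xs with
  | nil => rw [chainPLE_nil_right, LE, PLE]
  | cons a t ih ih' =>
    by_cases ha : a ∈ xs
    · obtain ⟨t', ht'⟩ := exists_chainPLE_cons_eq_cons a xs t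
      rcases xs with _ | ⟨y, ys⟩
      · simp at ha
      obtain rfl : y = a := by
        rw [ht', List.filter_cons_of_pos (by simpa using ha)] at hpre
        exact (List.cons_prefix_cons.1 hpre).1.symm
      obtain ⟨hys, hnodup⟩ := List.nodup_cons.1 hxs
      have hstep : chainPLE (y :: ys) (y :: t) = y :: chainPLE ys (dropToLastOcc y t) := by
        rw [chainPLE_cons, PLE_singleton_cons_self, chainPLE_cons_of_notMem hys]
      have hy : y ∉ chainPLE ys (dropToLastOcc y t) :=
        fun h => notMem_dropToLastOcc y t ((chainPLE_sublist _ _).subset h)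
      rw [hstep, LE_cons, ih' hnodup]
      · intro z hz
        by_cases hzy : z = y
        · simp [hzy, List.count_eq_zero.2 (notMem_dropToLastOcc y t)]
        · exact ((dropToLastOcc_sublist y t).count_le z).trans
            ((List.count_le_count_cons ..).trans (hw z (by simp [hzy, hz])))
      · have hfilter : (chainPLE ys (dropToLastOcc y t)).filter (· ∈ ys) =
            (chainPLE ys (dropToLastOcc y t)).filter (· ∈ y :: ys) :=
          List.filter_congr fun z hz => by simp [show z ≠ y from fun h => hy (h ▸ hz)]
        rw [hstep, List.filter_cons_of_pos (by simp)] at hpre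
        exact hfilter ▸ (List.cons_prefix_cons.1 hpre).2
    · have hat : a ∉ t := notMem_of_count_cons_self_le_one (hw a ha)
      rw [chainPLE_cons_of_notMem ha, LE_cons, dropToLastOcc_of_notMem hat, ih hxs]
      · exact fun z hz => (List.count_le_count_cons ..).trans (hw z hz)
      · rwa [chainPLE_cons_of_notMem ha, List.filter_cons_of_neg (by simpa using ha)] at hpre

theorem iterPLE_projection_ne_of_LE_projection_ne_general
    {V : Type*} [Fintype V] [DecidableEq V]
    (V₁ : Finset V)
    (k : ℕ) (v : ℕ → V)
    (W : ℕ → Finset V)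
    (hW1 : W 1 = V₁)
    (hWm : W ((Finset.univ \ V₁).card + 1) = Finset.univ)
    (hWstep : ∀ j : ℕ, 1 ≤ j → j ≤ (Finset.univ \ V₁).card →
      W j ⊆ W (j + 1) ∧ (W (j + 1) \ W j).card = 1)
    (hWv : ∀ j ≤ k, W (j + 2) \ W (j + 1) = {v j})
    (w : List V) (hwfix : PLE V₁ w = w)
    (hwproj : (LE w).filter (fun z => z ∉ V₁) ≠ (List.range (k + 1)).map v) :
    (iterPLE (fun n => W (n + 1)) (Finset.univ \ V₁).card w).filter (fun z => z ∉ V₁) ≠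
      (List.range (k + 1)).map v := by
  obtain ⟨xs, hlen, hnodup, hdisj, hmem, hstep⟩ :=
    exists_list_of_card_sdiff_eq_one (fun j => W (j + 1)) (Finset.univ \ V₁).card
      fun j hj => hWstep (j + 1) (by omega) (by omega)
  rw [← hlen] at hWm hmem ⊢
  simp only [zero_add, hW1, hWm, Finset.mem_univ, true_iff] at hdisj hmem
  have hxs : ∀ z, z ∈ xs ↔ z ∉ V₁ :=
    fun z => ⟨hdisj z, fun hz => (hmem z).resolve_left hz⟩
  have hcount : ∀ z ∈ V₁, w.count z ≤ 1 := fun z hz => hwfix ▸ count_PLE_le_one V₁ w hz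
  -- `W` is already `univ` at index `xs.length + 1`, so it cannot grow by `{v xs.length}`.
  have hk : k < xs.length := by
    by_contra! hk
    have := hWv xs.length hk
    rw [hWm, Finset.sdiff_eq_empty_iff_subset.2 (Finset.subset_univ _)] at this
    exact Finset.singleton_ne_empty _ this.symm
  have hv : (List.range (k + 1)).map v = xs.take (k + 1) := by
    refine List.ext_getElem (by simp; omega) fun j hj _ => ?_
    obtain ⟨hj', hins⟩ := hstep j (by simp at hj; omega)
    have := hWv j (by simp at hj; omega)
    rw [hins, Finset.insert_sdiff_cancel hj'] at this
    simpa using (Finset.singleton_inj.1 this).symm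
  rw [iterPLE_eq_chainPLE _ xs (fun j hj => (hstep j hj).2) (hW1 ▸ hcount)]
  intro h
  have hfilter : (chainPLE xs w).filter (· ∈ xs) = (List.range (k + 1)).map v := by
    simpa [hxs] using h
  refine hwproj ?_
  rw [← chainPLE_eq_LE_of_filter_prefix w hnodup
    (fun z hz => hcount z (by simpa [hxs] using hz)) (hfilter ▸ hv ▸ List.take_prefix _ _), ← h]

theorem iterPLE_projection_ne_of_LE_projection_ne
    {V : Type*} [Fintype V] [DecidableEq V]
    (V₁ : Finset V) (hV₁ : V₁.Nonempty) (hV₁ne : V₁ ≠ Finset.univ)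
    (k : ℕ) (v : ℕ → V)
    (hvinj : ∀ i ≤ k, ∀ j ≤ k, v i = v j → i = j)
    (hvout : ∀ j ≤ k, v j ∉ V₁)
    (W : ℕ → Finset V)
    (hW1 : W 1 = V₁)
    (hWm : W ((Finset.univ \ V₁).card + 1) = Finset.univ)
    (hWstep : ∀ j : ℕ, 1 ≤ j → j ≤ (Finset.univ \ V₁).card →
      W j ⊆ W (j + 1) ∧ (W (j + 1) \ W j).card = 1)
    (hWv : ∀ j ≤ k, W (j + 2) \ W (j + 1) = {v j})
    (w : List V) (hwfix : PLE V₁ w = w)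
    (hwproj : (LE w).filter (fun z => z ∉ V₁) ≠ (List.range (k + 1)).map v) :
    (iterPLE (fun n => W (n + 1)) (Finset.univ \ V₁).card w).filter (fun z => z ∉ V₁) ≠
      (List.range (k + 1)).map v :=
  iterPLE_projection_ne_of_LE_projection_ne_general V₁ k v W hW1 hWm hWstep hWv w hwfix hwproj

end LERW
end

section
/- Let (Ω, X_n, ℙ_x) be a Markov chain on a nonempty finite set V, let B ⊆ V with B ≠ V satisfy ℙ_z(τ_{V∖B} < ∞) = 1 for every z ∈ B, and let x, y ∈ B with x ≠ y. Then G_{B∖{y}}(x,x) = (1 − ℙ_x(τ_y < τ_{V∖B}) · ℙ_y(τ_x < τ_{V∖B})) · G_B(x,x), where τ_y = τ_{{y}} and τ_x = τ_{{x}}. -/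
open MeasureTheory

/-! Write `Q_S` for the transition matrix of the chain killed on leaving `S`, so that
`G_S(a, b) = ∑ₙ Q_Sⁿ(a, b)` for `a ∈ S`. Splitting a path counted by `G_B(x, x)` at its first
visit to `y` gives `G_B(x, x) = G_{B∖{y}}(x, x) + p · G_B(y, x)` with `p = ℙ_x(τ_y < τ_{V∖B})`, and
splitting a path counted by `G_B(y, x)` at its first visit to `x` gives `G_B(y, x) = q · G_B(x, x)`
with `q = ℙ_y(τ_x < τ_{V∖B})`. The exit hypothesis makes the row sums of some power of `Q_B`
uniformly smaller than one on `B`, so `G_B(x, x)` is finite and the two identities can be solved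
in `ℝ`. -/

open scoped ENNReal
open Finset.HasAntidiagonal

theorem ENNReal.tsum_mul_tsum_eq_tsum_sum_antidiagonal (f g : ℕ → ℝ≥0∞) :
    (∑' n, f n) * ∑' n, g n = ∑' n, ∑ kl ∈ antidiagonal n, f kl.1 * g kl.2 := by
  simp_rw [← ENNReal.tsum_mul_right, ← ENNReal.tsum_mul_left, ← Finset.tsum_subtype]
  rw [← ENNReal.tsum_prod, ← Finset.HasAntidiagonal.sigmaAntidiagonalEquivProd.tsum_eq,
    ENNReal.tsum_sigma']
  rfl

theorem ENNReal.tsum_lt_top_of_add_le_mul {a : ℕ → ℝ≥0∞} {ρ : ℝ≥0∞} {N : ℕ} (hN : 0 < N)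
    (hρ : ρ < 1) (ha : ∀ n, a n ≤ 1) (hshift : ∀ n, a (n + N) ≤ ρ * a n) :
    ∑' n, a n < ∞ := by
  have : NeZero N := ⟨hN.ne'⟩
  have hgeom : ∀ k j, a (k * N + j) ≤ ρ ^ k := by
    intro k j
    induction k with
    | zero => simpa using ha j
    | succ k ih =>
      calc a ((k + 1) * N + j) = a (k * N + j + N) := by ring_nf
        _ ≤ ρ * a (k * N + j) := hshift _
        _ ≤ ρ ^ (k + 1) := by rw [pow_succ']; gcongr
  calc ∑' n, a n = ∑' p : ℕ × Fin N, a (p.1 * N + p.2) :=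
        ((Nat.divModEquiv N).symm.tsum_eq _).symm
    _ ≤ ∑' p : ℕ × Fin N, ρ ^ p.1 := ENNReal.tsum_le_tsum fun p => hgeom _ _
    _ = N * (1 - ρ)⁻¹ := by
        simp_rw [ENNReal.tsum_prod (f := fun k (_ : Fin N) => ρ ^ k), tsum_fintype,
          Finset.sum_const, Finset.card_univ, Fintype.card_fin, nsmul_eq_mul]
        rw [ENNReal.tsum_mul_left, ENNReal.tsum_geometric]
    _ < ∞ := ENNReal.mul_lt_top (ENNReal.natCast_lt_top N)
        (ENNReal.inv_lt_top.2 (tsub_pos_of_lt hρ))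

theorem add_pow_succ_eq_add_sum_antidiagonal {R : Type*} [Semiring R] (a b : R) (n : ℕ) :
    (a + b) ^ (n + 1) = a ^ (n + 1) + ∑ kl ∈ antidiagonal n, a ^ kl.1 * b * (a + b) ^ kl.2 := by
  induction n with
  | zero => simp
  | succ n ih =>
    rw [pow_succ' _ (n + 1), add_mul]
    nth_rw 1 [ih]
    simp only [Finset.Nat.sum_antidiagonal_succ, mul_add, Finset.mul_sum, pow_zero, one_mul,
      pow_succ' a, mul_assoc]
    abel

-- `Q * single y y 1` is the column `y` of `Q`: a path is split at its first step into `y`.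
theorem Matrix.tsum_pow_apply_eq_add_of_eq_add_mul_single {ι : Type*} [Fintype ι] [DecidableEq ι]
    {Q R : Matrix ι ι ℝ≥0∞} {y : ι} (h : Q = R + Q * Matrix.single y y 1) (i j : ι) :
    ∑' n, (Q ^ n) i j = ∑' n, (R ^ n) i j + (∑' n, (R ^ n * Q) i y) * ∑' n, (Q ^ n) y j := by
  have hsingle : ∀ M N : Matrix ι ι ℝ≥0∞,
      (M * (Q * Matrix.single y y 1) * N : Matrix ι ι ℝ≥0∞) i j = (M * Q) i y * N y j := by
    intro M N
    simp [← mul_assoc, Matrix.mul_apply, Matrix.single_apply, ite_and]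
  have hsucc : ∀ n, (Q ^ (n + 1)) i j = (R ^ (n + 1)) i j +
      ∑ kl ∈ antidiagonal n, (R ^ kl.1 * Q) i y * (Q ^ kl.2) y j := by
    intro n
    have := add_pow_succ_eq_add_sum_antidiagonal R (Q * Matrix.single y y 1) n
    rw [← h] at this
    simp [this, Matrix.sum_apply, hsingle]
  rw [tsum_eq_zero_add' ENNReal.summable, tsum_eq_zero_add' (f := fun n => (R ^ n) i j)
    ENNReal.summable, ENNReal.tsum_mul_tsum_eq_tsum_sum_antidiagonal]
  simp only [hsucc, ENNReal.tsum_add, pow_zero, add_assoc]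

namespace LERW

variable {V : Type*}

section EntryTime

variable {A : Finset V} {ω : ℕ → V} {n : ℕ}

theorem coe_le_entryTime_iff : (n : ℕ∞) ≤ entryTime A ω ↔ ∀ k < n, ω k ∉ A := by
  simp only [entryTime, le_sInf_iff, Set.mem_ofPred_eq]
  constructor
  · intro h k hk hkA
    exact absurd (h k ⟨k, rfl, hkA⟩) (by exact_mod_cast hk.not_ge)
  · rintro h _ ⟨k, rfl, hkA⟩
    exact_mod_cast not_lt.1 fun hk => h k hk hkA

theorem coe_lt_entryTime_iff : (n : ℕ∞) < entryTime A ω ↔ ∀ k ≤ n, ω k ∉ A := by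
  rw [← ENat.add_one_le_iff (ENat.natCast_ne_top n), ← Nat.cast_succ, coe_le_entryTime_iff]
  simp only [Nat.lt_succ_iff]

theorem entryTime_eq_coe_iff : entryTime A ω = n ↔ ω n ∈ A ∧ ∀ k < n, ω k ∉ A := by
  rw [le_antisymm_iff, ← not_lt, coe_lt_entryTime_iff, coe_le_entryTime_iff]
  constructor
  · rintro ⟨h, hlt⟩
    push Not at h
    obtain ⟨k, hk, hkA⟩ := h
    obtain rfl : k = n := le_antisymm hk (not_lt.1 fun h => hlt k h hkA)
    exact ⟨hkA, hlt⟩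
  · rintro ⟨hnA, hlt⟩
    exact ⟨fun h => h n le_rfl hnA, hlt⟩

theorem setOf_entryTime_singleton_lt_entryTime_compl_eq_iUnion [DecidableEq V] [Fintype V]
    {B : Finset V} {b : V} (hb : b ∈ B) :
    {ω | entryTime {b} ω < entryTime Bᶜ ω} =
      ⋃ n, {ω | ω n = b ∧ ∀ k < n, ω k ∈ B.erase b} := by
  ext ω
  simp only [Set.mem_ofPred_eq, Set.mem_iUnion]
  constructor
  · intro h
    obtain ⟨n, hn⟩ := ENat.ne_top_iff_exists.1 (ne_top_of_lt h)
    rw [← hn, coe_lt_entryTime_iff] at h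
    rw [eq_comm, entryTime_eq_coe_iff] at hn
    simp only [Finset.mem_singleton, Finset.mem_compl, not_not] at h hn
    exact ⟨n, hn.1, fun k hk => Finset.mem_erase.2 ⟨hn.2 k hk, h k hk.le⟩⟩
  · rintro ⟨n, hn, hlt⟩
    have hτ : entryTime {b} ω = n := entryTime_eq_coe_iff.2
      ⟨Finset.mem_singleton.2 hn, fun k hk => by simpa using (Finset.mem_erase.1 (hlt k hk)).1⟩
    rw [hτ, coe_lt_entryTime_iff]
    intro k hk
    rw [Finset.mem_compl, not_not]
    rcases hk.lt_or_eq with hk | rfl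
    · exact (Finset.mem_erase.1 (hlt k hk)).2
    · exact hn ▸ hb

end EntryTime

def pathPrefix (n : ℕ) (ω : ℕ → V) : Fin (n + 1) → V := fun i => ω i

theorem measurable_pathPrefix [MeasurableSpace V] (n : ℕ) :
    Measurable (pathPrefix (V := V) n) :=
  measurable_pi_lambda _ fun _ => measurable_pi_apply _

theorem pathPrefix_eq_pathPrefix_iff {n : ℕ} {ω y : ℕ → V} :
    pathPrefix n ω = pathPrefix n y ↔ ∀ i ≤ n, ω i = y i := by
  simp [funext_iff, pathPrefix, Fin.forall_iff]

theorem forall_pathPrefix_mem_iff {n : ℕ} {ω : ℕ → V} {S : Finset V} :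
    (∀ i, pathPrefix n ω i ∈ S) ↔ ∀ k ≤ n, ω k ∈ S := by
  simp [pathPrefix, Fin.forall_iff]

theorem exists_pathPrefix_eq_and_eq (n : ℕ) (d : Fin (n + 1) → V) (b : V) :
    ∃ y : ℕ → V, pathPrefix n y = d ∧ y (n + 1) = b :=
  ⟨fun k => if h : k ≤ n then d ⟨k, Nat.lt_succ_of_le h⟩ else b,
    funext fun i => by simp [pathPrefix, Nat.le_of_lt_succ i.isLt], by simp⟩

section KilledMatrix

variable [DecidableEq V] (P : V → V → ℝ)

noncomputable def killedMatrix (S : Finset V) : Matrix V V ℝ≥0∞ :=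
  Matrix.of fun a b => if b ∈ S then ENNReal.ofReal (P a b) else 0

theorem killedMatrix_apply (S : Finset V) (a b : V) :
    killedMatrix P S a b = if b ∈ S then ENNReal.ofReal (P a b) else 0 :=
  rfl

variable [Fintype V] {S : Finset V}

theorem killedMatrix_eq_erase_add {y : V} (hy : y ∈ S) :
    killedMatrix P S = killedMatrix P (S.erase y) + killedMatrix P S * Matrix.single y y 1 := by
  ext a b
  by_cases hb : b = y
  · subst hb
    simp [killedMatrix_apply, hy]
  · simp [killedMatrix_apply, hb]

theorem killedMatrix_pow_apply_eq_zero {a b : V} (ha : a ∈ S) (hb : b ∉ S) :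
    ∀ n, (killedMatrix P S ^ n) a b = 0
  | 0 => Matrix.one_apply_ne (ne_of_mem_of_not_mem ha hb)
  | n + 1 => by simp [pow_succ, Matrix.mul_apply, killedMatrix_apply, hb]

end KilledMatrix

theorem exists_forall_measure_forall_le_mem_lt_one [MeasurableSpace V]
    [MeasurableSingletonClass V] {μ : V → Measure (ℕ → V)} [∀ a, IsProbabilityMeasure (μ a)]
    {B : Finset V} (hexit : ∀ z ∈ B, μ z {ω | ∃ n, ω n ∉ B} = 1) :
    ∃ N, 0 < N ∧ ∀ z ∈ B, μ z {ω | ∀ k ≤ N, ω k ∈ B} < 1 := by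
  have hlim : ∀ z ∈ B, ∀ᶠ N in Filter.atTop, μ z {ω | ∀ k ≤ N, ω k ∈ B} < 1 := by
    intro z hz
    have hinter : ⋂ N, {ω : ℕ → V | ∀ k ≤ N, ω k ∈ B} = {ω | ∃ n, ω n ∉ B}ᶜ := by
      ext ω
      simp only [Set.mem_iInter, Set.mem_ofPred_eq, Set.mem_compl_iff, not_exists, not_not]
      exact ⟨fun h n => h n n le_rfl, fun h _ k _ => h k⟩
    have htend := tendsto_measure_iInter_atTop (μ := μ z)
      (s := fun N => {ω : ℕ → V | ∀ k ≤ N, ω k ∈ B})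
      (fun N => (by measurability : MeasurableSet _).nullMeasurableSet)
      (fun m n hmn ω hω k hk => hω k (hk.trans hmn)) ⟨0, measure_ne_top _ _⟩
    rw [hinter, (prob_compl_eq_zero_iff (by measurability)).2 (hexit z hz)] at htend
    exact htend.eventually_lt_const zero_lt_one
  obtain ⟨N, hN, hpos⟩ :=
    (((Filter.eventually_all_finset B).2 hlim).and (Filter.eventually_gt_atTop 0)).exists
  exact ⟨N, hpos, hN⟩

section MarkovChain

variable [DecidableEq V] [MeasurableSpace V]

def IsMarkovChain (P : V → V → ℝ) (μ : V → Measure (ℕ → V)) : Prop :=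
  ∀ (a : V) (n : ℕ) (y : ℕ → V),
    μ a {ω | ∀ i ≤ n, ω i = y i} =
      ENNReal.ofReal ((if a = y 0 then (1 : ℝ) else 0) *
        ∏ i ∈ Finset.Icc 1 n, P (y (i - 1)) (y i))

variable {P : V → V → ℝ} {μ : V → Measure (ℕ → V)}

namespace IsMarkovChain

theorem measure_start (h : IsMarkovChain P μ) (a b : V) :
    μ a {ω | ω 0 = b} = if a = b then 1 else 0 := by
  have := h a 0 fun _ => b
  simp only [nonpos_iff_eq_zero, forall_eq, Finset.Icc_eq_empty_of_lt Nat.zero_lt_one,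
    Finset.prod_empty, mul_one] at this
  rw [this]
  split_ifs <;> simp

theorem measure_cylinder_succ (hP : ∀ a b, 0 ≤ P a b) (h : IsMarkovChain P μ) (a : V) (n : ℕ)
    (y : ℕ → V) :
    μ a {ω | ∀ i ≤ n + 1, ω i = y i} =
      μ a {ω | ∀ i ≤ n, ω i = y i} * ENNReal.ofReal (P (y n) (y (n + 1))) := by
  have hprod : 0 ≤ (if a = y 0 then (1 : ℝ) else 0) * ∏ i ∈ Finset.Icc 1 n, P (y (i - 1)) (y i) :=
    mul_nonneg (by split_ifs <;> norm_num) (Finset.prod_nonneg fun _ _ => hP _ _)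
  rw [h, h, Finset.prod_Icc_succ_top (by omega), ← mul_assoc, ENNReal.ofReal_mul hprod,
    Nat.add_sub_cancel]

variable [MeasurableSingletonClass V] [Fintype V]

theorem measure_pathPrefix_mem_and_succ_eq (hP : ∀ a b, 0 ≤ P a b) (h : IsMarkovChain P μ)
    (a : V) (n : ℕ) (R : Finset (Fin (n + 1) → V)) (z : V) :
    μ a {ω | pathPrefix n ω ∈ R ∧ ω (n + 1) = z} =
      ∑ w, μ a {ω | pathPrefix n ω ∈ R ∧ ω n = w} * ENNReal.ofReal (P w z) := by
  have hstep : ∀ d b, μ a ((fun ω => (pathPrefix n ω, ω (n + 1))) ⁻¹' {(d, b)}) =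
      μ a (pathPrefix n ⁻¹' {d}) * ENNReal.ofReal (P (d (Fin.last n)) b) := by
    intro d b
    obtain ⟨y, rfl, rfl⟩ := exists_pathPrefix_eq_and_eq n d b
    convert measure_cylinder_succ hP h a n y using 3
    · ext ω
      simp only [Set.mem_preimage, Set.mem_singleton_iff, Prod.mk.injEq,
        pathPrefix_eq_pathPrefix_iff, Set.mem_ofPred_eq, Nat.le_succ_iff, or_imp, forall_and,
        forall_eq]
    · ext ω
      simp [pathPrefix_eq_pathPrefix_iff]
    · rfl
  have hpre : ∀ {m : ℕ} (T : Finset (Fin (m + 1) → V)),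
      μ a (pathPrefix m ⁻¹' T) = ∑ d ∈ T, μ a (pathPrefix m ⁻¹' {d}) := fun T =>
    (sum_measure_preimage_singleton T fun _ _ =>
      measurable_pathPrefix _ (measurableSet_singleton _)).symm
  calc μ a {ω | pathPrefix n ω ∈ R ∧ ω (n + 1) = z}
      = ∑ p ∈ R ×ˢ {z}, μ a ((fun ω => (pathPrefix n ω, ω (n + 1))) ⁻¹' {p}) := by
        rw [sum_measure_preimage_singleton _ fun _ _ =>
          ((measurable_pathPrefix n).prodMk (measurable_pi_apply _)) (measurableSet_singleton _)]
        congr 1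
        ext ω
        simp [eq_comm]
    _ = ∑ d ∈ R, μ a (pathPrefix n ⁻¹' {d}) * ENNReal.ofReal (P (d (Fin.last n)) z) := by
        simp [hstep]
    _ = ∑ w, ∑ d ∈ R with d (Fin.last n) = w,
          μ a (pathPrefix n ⁻¹' {d}) * ENNReal.ofReal (P (d (Fin.last n)) z) :=
        (Finset.sum_fiberwise _ _ _).symm
    _ = ∑ w, μ a {ω | pathPrefix n ω ∈ R ∧ ω n = w} * ENNReal.ofReal (P w z) := by
        refine Finset.sum_congr rfl fun w _ => ?_
        have hfiber : {ω | pathPrefix n ω ∈ R ∧ ω n = w} =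
            pathPrefix n ⁻¹' ↑(R.filter fun d => d (Fin.last n) = w) := by
          ext ω
          simp [pathPrefix]
        rw [Finset.sum_congr rfl fun d hd => by rw [(Finset.mem_filter.1 hd).2],
          ← Finset.sum_mul, hfiber, hpre]

theorem measure_succ_eq_and_forall_le_mem (hP : ∀ a b, 0 ≤ P a b) (h : IsMarkovChain P μ)
    (a : V) (n : ℕ) (S : Finset V) (z : V) :
    μ a {ω | ω (n + 1) = z ∧ ∀ k ≤ n, ω k ∈ S} =
      ∑ w, μ a {ω | ω n = w ∧ ∀ k ≤ n, ω k ∈ S} * ENNReal.ofReal (P w z) := by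
  set R := Finset.univ.filter fun c : Fin (n + 1) → V => ∀ i, c i ∈ S
  have hR : ∀ ω, pathPrefix n ω ∈ R ↔ ∀ k ≤ n, ω k ∈ S := by
    simp [R, forall_pathPrefix_mem_iff]
  have := measure_pathPrefix_mem_and_succ_eq hP h a n R z
  simp only [hR] at this
  simpa only [and_comm] using this

theorem measure_eq_and_forall_le_mem (hP : ∀ a b, 0 ≤ P a b) (h : IsMarkovChain P μ)
    {S : Finset V} {a : V} (ha : a ∈ S) (n : ℕ) (z : V) :
    μ a {ω | ω n = z ∧ ∀ k ≤ n, ω k ∈ S} = (killedMatrix P S ^ n) a z := by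
  induction n generalizing z with
  | zero =>
    rw [pow_zero, Matrix.one_apply]
    by_cases haz : a = z
    · subst haz
      have hset : {ω : ℕ → V | ω 0 = a ∧ ∀ k ≤ 0, ω k ∈ S} = {ω | ω 0 = a} := by
        ext ω
        simp +contextual [ha]
      rw [hset, h.measure_start, if_pos rfl]
    · rw [if_neg haz]
      exact measure_mono_null (fun ω hω => hω.1) ((h.measure_start a z).trans (if_neg haz))
  | succ n ih =>
    by_cases hz : z ∈ S
    · have hset : {ω : ℕ → V | ω (n + 1) = z ∧ ∀ k ≤ n + 1, ω k ∈ S} =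
          {ω | ω (n + 1) = z ∧ ∀ k ≤ n, ω k ∈ S} := by
        ext ω
        simp +contextual [Nat.le_succ_iff, or_imp, forall_and, hz]
      rw [hset, measure_succ_eq_and_forall_le_mem hP h, pow_succ, Matrix.mul_apply]
      simp [ih, killedMatrix_apply, hz]
    · rw [killedMatrix_pow_apply_eq_zero P ha hz]
      refine measure_mono_null (fun ω hω => hz ?_) measure_empty
      exact hω.1 ▸ hω.2 _ le_rfl

theorem measure_forall_le_mem (hP : ∀ a b, 0 ≤ P a b) (h : IsMarkovChain P μ)
    {S : Finset V} {a : V} (ha : a ∈ S) (n : ℕ) :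
    μ a {ω | ∀ k ≤ n, ω k ∈ S} = ∑ b, (killedMatrix P S ^ n) a b := by
  have hunion : {ω : ℕ → V | ∀ k ≤ n, ω k ∈ S} =
      ⋃ b ∈ Finset.univ, {ω | ω n = b ∧ ∀ k ≤ n, ω k ∈ S} := by
    ext ω
    simp
  rw [hunion, measure_biUnion_finset
    (fun b _ c _ hbc => Set.disjoint_left.2 fun ω h1 h2 => hbc (h1.1.symm.trans h2.1))
    (fun b _ => by measurability)]
  exact Finset.sum_congr rfl fun b _ => measure_eq_and_forall_le_mem hP h ha n b

theorem measure_entryTime_lt_entryTime_compl (hP : ∀ a b, 0 ≤ P a b) (h : IsMarkovChain P μ)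
    {B : Finset V} {x y : V} (hy : y ∈ B) (hx : x ∈ B.erase y) :
    μ x {ω | entryTime {y} ω < entryTime Bᶜ ω} =
      ∑' n, (killedMatrix P (B.erase y) ^ n * killedMatrix P B) x y := by
  have hdisj : Pairwise (Function.onFun Disjoint
      fun n => {ω : ℕ → V | ω n = y ∧ ∀ k < n, ω k ∈ B.erase y}) := by
    refine (pairwise_disjoint_on _).2 fun m n hmn => Set.disjoint_left.2 fun ω hm hn => ?_
    exact Finset.ne_of_mem_erase (hn.2 m hmn) hm.1
  have h0 : μ x {ω | ω 0 = y ∧ ∀ k < 0, ω k ∈ B.erase y} = 0 :=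
    measure_mono_null (fun ω hω => hω.1)
      ((h.measure_start x y).trans (if_neg (Finset.ne_of_mem_erase hx)))
  rw [setOf_entryTime_singleton_lt_entryTime_compl_eq_iUnion hy,
    measure_iUnion hdisj fun n => by measurability, tsum_eq_zero_add' ENNReal.summable, h0,
    zero_add]
  refine tsum_congr fun n => ?_
  simp only [Nat.lt_succ_iff]
  rw [measure_succ_eq_and_forall_le_mem hP h, Matrix.mul_apply]
  refine Finset.sum_congr rfl fun w _ => ?_
  rw [measure_eq_and_forall_le_mem hP h hx, killedMatrix_apply, if_pos hy]

theorem green_eq_toReal_tsum_pow (hP : ∀ a b, 0 ≤ P a b) (h : IsMarkovChain P μ)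
    {S : Finset V} {a : V} (ha : a ∈ S) [IsFiniteMeasure (μ a)] (z : V) :
    green μ S a z = (∑' n, (killedMatrix P S ^ n) a z).toReal := by
  simp_rw [green, ← measure_eq_and_forall_le_mem hP h ha]
  exact (ENNReal.tsum_toReal_eq fun n => measure_ne_top _ _).symm

theorem tsum_killedMatrix_pow_lt_top (hP : ∀ a b, 0 ≤ P a b) (h : IsMarkovChain P μ)
    [∀ a, IsProbabilityMeasure (μ a)] {B : Finset V}
    (hexit : ∀ z ∈ B, μ z {ω | ∃ n, ω n ∉ B} = 1) {x : V} (hx : x ∈ B) (z : V) :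
    ∑' n, (killedMatrix P B ^ n) x z < ⊤ := by
  obtain ⟨N, hN, hlt⟩ := exists_forall_measure_forall_le_mem_lt_one hexit
  set ρ := B.sup fun a => ∑ b, (killedMatrix P B ^ N) a b
  have hρ : ρ < 1 := (Finset.sup_lt_iff zero_lt_one).2 fun a ha =>
    measure_forall_le_mem hP h ha N ▸ hlt a ha
  have hshift : ∀ n, ∑ b, (killedMatrix P B ^ (n + N)) x b ≤
      ρ * ∑ b, (killedMatrix P B ^ n) x b := by
    intro n
    calc ∑ b, (killedMatrix P B ^ (n + N)) x b
        = ∑ w, (killedMatrix P B ^ n) x w * ∑ b, (killedMatrix P B ^ N) w b := by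
          simp_rw [pow_add, Matrix.mul_apply, Finset.mul_sum]
          exact Finset.sum_comm
      _ ≤ ∑ w, (killedMatrix P B ^ n) x w * ρ := by
          refine Finset.sum_le_sum fun w _ => ?_
          by_cases hw : w ∈ B
          · gcongr
            exact Finset.le_sup (f := fun a => ∑ b, (killedMatrix P B ^ N) a b) hw
          · simp [killedMatrix_pow_apply_eq_zero P hx hw]
      _ = ρ * ∑ b, (killedMatrix P B ^ n) x b := by rw [← Finset.sum_mul, mul_comm]
  calc ∑' n, (killedMatrix P B ^ n) x z ≤ ∑' n, ∑ b, (killedMatrix P B ^ n) x b :=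
        ENNReal.tsum_le_tsum fun n => Finset.single_le_sum (fun b _ => zero_le)
          (Finset.mem_univ z)
    _ < ⊤ := ENNReal.tsum_lt_top_of_add_le_mul hN hρ
        (fun n => measure_forall_le_mem hP h hx n ▸ prob_le_one) hshift

end IsMarkovChain

end MarkovChain

theorem green_erase_eq_escape_probability_general
    {V : Type*} [Fintype V] [DecidableEq V]
    [MeasurableSpace V] [MeasurableSingletonClass V]
    (P : V → V → ℝ) (μ : V → Measure (ℕ → V))
    (hP0 : ∀ a b : V, 0 ≤ P a b)
    (hprob : ∀ a : V, IsProbabilityMeasure (μ a))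
    (hlaw : ∀ (a : V) (n : ℕ) (y : ℕ → V),
      μ a {ω | ∀ i ≤ n, ω i = y i} =
        ENNReal.ofReal ((if a = y 0 then (1 : ℝ) else 0) *
          ∏ i ∈ Finset.Icc 1 n, P (y (i - 1)) (y i)))
    (B : Finset V)
    (hexit : ∀ z ∈ B, μ z {ω | ∃ n : ℕ, ω n ∉ B} = 1)
    (x y : V) (hx : x ∈ B) (hy : y ∈ B) (hxy : x ≠ y) :
    green μ (B.erase y) x x =
      (1 - (μ x {ω | entryTime {y} ω < entryTime Bᶜ ω}).toReal *
          (μ y {ω | entryTime {x} ω < entryTime Bᶜ ω}).toReal) *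
        green μ B x x := by
  have hM : IsMarkovChain P μ := hlaw
  have hxB : x ∈ B.erase y := Finset.mem_erase.2 ⟨hxy, hx⟩
  have hyB : y ∈ B.erase x := Finset.mem_erase.2 ⟨hxy.symm, hy⟩
  have hG := hM.tsum_killedMatrix_pow_lt_top hP0 hexit hx x
  -- from `y`, a path avoiding `x` never ends at `x`
  have hreturn :=
    Matrix.tsum_pow_apply_eq_add_of_eq_add_mul_single (killedMatrix_eq_erase_add P hx) y x
  simp only [killedMatrix_pow_apply_eq_zero P hyB (Finset.notMem_erase x B), tsum_zero,
    zero_add] at hreturn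
  have hfirst :=
    Matrix.tsum_pow_apply_eq_add_of_eq_add_mul_single (killedMatrix_eq_erase_add P hy) x x
  rw [hreturn] at hfirst
  rw [hM.green_eq_toReal_tsum_pow hP0 hxB, hM.green_eq_toReal_tsum_pow hP0 hx,
    hM.measure_entryTime_lt_entryTime_compl hP0 hy hxB,
    hM.measure_entryTime_lt_entryTime_compl hP0 hx hyB]
  obtain ⟨hGR, hpqG⟩ := ENNReal.add_ne_top.1 (hfirst ▸ hG.ne)
  have hreal := congrArg ENNReal.toReal hfirst
  rw [ENNReal.toReal_add hGR hpqG, ENNReal.toReal_mul, ENNReal.toReal_mul] at hreal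
  linear_combination -hreal

theorem green_erase_eq_escape_probability
    {V : Type*} [Fintype V] [DecidableEq V] [Nonempty V]
    [MeasurableSpace V] [MeasurableSingletonClass V]
    (P : V → V → ℝ) (μ : V → Measure (ℕ → V))
    (hP0 : ∀ a b : V, 0 ≤ P a b) (hP1 : ∀ a : V, ∑ b : V, P a b = 1)
    (hprob : ∀ a : V, IsProbabilityMeasure (μ a))
    (hlaw : ∀ (a : V) (n : ℕ) (y : ℕ → V),
      μ a {ω | ∀ i ≤ n, ω i = y i} =
        ENNReal.ofReal ((if a = y 0 then (1 : ℝ) else 0) *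
          ∏ i ∈ Finset.Icc 1 n, P (y (i - 1)) (y i)))
    (B : Finset V) (hB : B ≠ Finset.univ)
    (hexit : ∀ z ∈ B, μ z {ω | ∃ n : ℕ, ω n ∉ B} = 1)
    (x y : V) (hx : x ∈ B) (hy : y ∈ B) (hxy : x ≠ y) :
    green μ (B.erase y) x x =
      (1 - (μ x {ω | entryTime {y} ω < entryTime Bᶜ ω}).toReal *
          (μ y {ω | entryTime {x} ω < entryTime Bᶜ ω}).toReal) *
        green μ B x x :=
  green_erase_eq_escape_probability_general P μ hP0 hprob hlaw B hexit x y hx hy hxy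

end LERW
end
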